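/- Exact matching probability for a single proposal (K = 1): with Y = argmin_{1≤i≤N} S_i/q_i and X = argmin_{1≤i≤N} S_i/p_i computed from the same exponential random variables, the matching probability is exactly Pr[Y = X] = Σ_{j=1}^{N} 1 / ( Σ_{i=1}^{N} max{ q_i/q_j , p_i/p_j } ). In particular, the list matching lemma's lower bound is tight when K = 1. -/

import Mathlib

/-!
Put `c j i = max (q i / q j) (p i / p j)`. Both argmins equal `j` exactly when
`c j i * S j < S i` for every `i ≠ j`, and these events are disjoint in `j`. Given `S j = t`,
independence makes this event have probability `exp (-t ∑_{i ≠ j} c j i)`; integrating against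
the `Exp(1)` law of `S j` gives `1 / ∑ i, c j i`, because `c j j = 1`.
-/

open MeasureTheory ProbabilityTheory Set Function

section ExponentialDistribution

variable {r : ℝ}

lemma expMeasure_Iic_zero (hr : 0 < r) : expMeasure r (Iic 0) = 0 := by
  have := isProbabilityMeasure_expMeasure hr
  rw [← ofReal_cdf, cdf_expMeasure_eq hr]
  simp

lemma ae_pos_expMeasure (hr : 0 < r) : ∀ᵐ x ∂expMeasure r, 0 < x :=
  ae_iff.2 (measure_mono_null (fun _ hx => not_lt.1 hx) (expMeasure_Iic_zero hr))

lemma expMeasure_Ioi (hr : 0 < r) {a : ℝ} (ha : 0 ≤ a) :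
    expMeasure r (Ioi a) = ENNReal.ofReal (Real.exp (-(r * a))) := by
  have := isProbabilityMeasure_expMeasure hr
  have hcdf := cdf_nonneg (expMeasure r) a
  rw [← compl_Iic, prob_compl_eq_one_sub measurableSet_Iic, ← ofReal_cdf, ← ENNReal.ofReal_one,
    ← ENNReal.ofReal_sub _ hcdf, cdf_expMeasure_eq hr, if_pos ha, sub_sub_cancel]

lemma lintegral_exp_neg_mul_expMeasure (hr : 0 < r) {C : ℝ} (hC : 0 ≤ C) :
    ∫⁻ t, ENNReal.ofReal (Real.exp (-(C * t))) ∂expMeasure r = ENNReal.ofReal (r / (r + C)) := by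
  have hdensity : ∀ t ∈ Ioi (0 : ℝ),
      (gammaPDF 1 r * fun t => ENNReal.ofReal (Real.exp (-(C * t)))) t
        = ENNReal.ofReal (r * Real.exp (-(r + C) * t)) := by
    intro t ht
    change exponentialPDF r t * _ = _
    rw [exponentialPDF_of_nonneg (le_of_lt ht), ← ENNReal.ofReal_mul (by positivity), mul_assoc,
      ← Real.exp_add]
    ring_nf
  have hint : IntegrableOn (fun t => r * Real.exp (-(r + C) * t)) (Ioi 0) :=
    (exp_neg_integrableOn_Ioi 0 (by linarith)).const_mul r
  rw [← Measure.restrict_eq_self_of_ae_mem (s := Ioi 0) (ae_pos_expMeasure hr), expMeasure,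
    gammaMeasure, setLIntegral_withDensity_eq_setLIntegral_mul _ (f := gammaPDF 1 r)
      (measurable_gammaPDFReal 1 r).ennreal_ofReal (by fun_prop) measurableSet_Ioi,
    setLIntegral_congr_fun measurableSet_Ioi hdensity,
    ← ofReal_integral_eq_lintegral_ofReal hint (ae_of_all _ fun t => by positivity),
    integral_const_mul, integral_exp_mul_Ioi (by linarith)]
  congr 1
  field_simp
  simp

lemma pi_expMeasure_univ_pi_Ioi_mul (hr : 0 < r) {ι : Type*} [Fintype ι] {c : ι → ℝ}
    (hc : ∀ i, 0 ≤ c i) {t : ℝ} (ht : 0 ≤ t) :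
    Measure.pi (fun _ : ι => expMeasure r) (univ.pi fun i => Ioi (c i * t))
      = ENNReal.ofReal (Real.exp (-((r * ∑ i, c i) * t))) := by
  have := isProbabilityMeasure_expMeasure hr
  rw [Measure.pi_pi, Finset.prod_congr rfl fun i _ => expMeasure_Ioi hr (mul_nonneg (hc i) ht),
    ← ENNReal.ofReal_prod_of_nonneg fun i _ => (Real.exp_pos _).le, ← Real.exp_sum]
  congr 2
  simp only [Finset.mul_sum, Finset.sum_mul, Finset.sum_neg_distrib, mul_assoc]

lemma pi_expMeasure_forall_mul_lt (hr : 0 < r) {N : ℕ} (j : Fin N) {c : Fin N → ℝ}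
    (hc : ∀ i, 0 ≤ c i) (hcj : c j = 1) :
    Measure.pi (fun _ : Fin N => expMeasure r) {x | 0 < x j ∧ ∀ i ≠ j, c i * x j < x i}
      = ENNReal.ofReal (1 / ∑ i, c i) := by
  obtain ⟨n, rfl⟩ := Nat.exists_eq_add_one.2 j.pos
  have := isProbabilityMeasure_expMeasure hr
  set U : Set (ℝ × (Fin n → ℝ)) := {z | 0 < z.1 ∧ ∀ k, c (j.succAbove k) * z.1 < z.2 k}
  have hU : MeasurableSet U := by measurability
  have hpre : MeasurableEquiv.piFinSuccAbove (fun _ => ℝ) j ⁻¹' U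
      = {x | 0 < x j ∧ ∀ i ≠ j, c i * x j < x i} := by
    ext x
    simp [U, Fin.forall_iff_succAbove j, Fin.removeNth]
  have hslice : ∀ t, 0 < t → Prod.mk t ⁻¹' U = univ.pi fun k => Ioi (c (j.succAbove k) * t) := by
    intro t ht
    ext y
    simp [U, ht]
  rw [← hpre, (measurePreserving_piFinSuccAbove _ j).measure_preimage hU.nullMeasurableSet,
    Measure.prod_apply hU]
  have hC : 0 ≤ ∑ k, c (j.succAbove k) := Finset.sum_nonneg fun k _ => hc _
  have hlaw : ∀ᵐ t ∂expMeasure r, Measure.pi (fun _ => expMeasure r) (Prod.mk t ⁻¹' U)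
      = ENNReal.ofReal (Real.exp (-((r * ∑ k, c (j.succAbove k)) * t))) := by
    filter_upwards [ae_pos_expMeasure hr] with t ht
    rw [hslice t ht, pi_expMeasure_univ_pi_Ioi_mul hr (fun k => hc _) ht.le]
  rw [lintegral_congr_ae hlaw, lintegral_exp_neg_mul_expMeasure hr (by positivity),
    Fin.sum_univ_succAbove c j, hcj]
  congr 1
  field_simp

end ExponentialDistribution

section StrictArgmin

variable {ι α : Type*}

def IsStrictArgmin [Preorder α] (f : ι → α) (a : ι) : Prop :=
  ∀ i, i ≠ a → f a < f i

lemma IsStrictArgmin.unique [Preorder α] {f : ι → α} {a b : ι} (ha : IsStrictArgmin f a)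
    (hb : IsStrictArgmin f b) : a = b := by
  by_contra h
  exact lt_asymm (ha b (Ne.symm h)) (hb a h)

lemma isStrictArgmin_div_iff {s w : ι → ℝ} (hw : ∀ i, 0 < w i) {j : ι} :
    IsStrictArgmin (fun i => s i / w i) j ↔ ∀ i ≠ j, w i / w j * s j < s i := by
  refine forall₂_congr fun i _ => ?_
  rw [div_lt_div_iff₀ (hw j) (hw i), div_mul_eq_mul_div, div_lt_iff₀ (hw j), mul_comm (s j)]

end StrictArgmin

section MatchingEvent

variable {ι : Type*} {p q : ι → ℝ}

def matchingEvent (p q : ι → ℝ) (j : ι) : Set (ι → ℝ) :=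
  {s | 0 < s j ∧ ∀ i ≠ j, max (q i / q j) (p i / p j) * s j < s i}

lemma mem_matchingEvent_iff (hp : ∀ i, 0 < p i) (hq : ∀ i, 0 < q i) {s : ι → ℝ} {j : ι}
    (hs : 0 < s j) :
    s ∈ matchingEvent p q j ↔
      IsStrictArgmin (fun i => s i / q i) j ∧ IsStrictArgmin (fun i => s i / p i) j := by
  simp only [matchingEvent, mem_ofPred_eq, hs, true_and, isStrictArgmin_div_iff hq,
    isStrictArgmin_div_iff hp, max_mul_of_nonneg _ _ hs.le, max_lt_iff, ← forall_and]

lemma measurableSet_matchingEvent [Countable ι] (p q : ι → ℝ) (j : ι) :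
    MeasurableSet (matchingEvent p q j) := by
  unfold matchingEvent
  measurability

lemma pairwise_disjoint_matchingEvent (hp : ∀ i, 0 < p i) (hq : ∀ i, 0 < q i) :
    Pairwise (Disjoint on matchingEvent p q) := by
  intro j k hjk
  refine Set.disjoint_left.2 fun s hj hk => hjk ?_
  exact ((mem_matchingEvent_iff hp hq hj.1).1 hj).1.unique
    ((mem_matchingEvent_iff hp hq hk.1).1 hk).1

lemma eq_iff_mem_iUnion_matchingEvent (hp : ∀ i, 0 < p i) (hq : ∀ i, 0 < q i) {s : ι → ℝ}
    (hs : ∀ i, 0 < s i) {y x : ι} (hy : IsStrictArgmin (fun i => s i / q i) y)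
    (hx : IsStrictArgmin (fun i => s i / p i) x) :
    y = x ↔ s ∈ ⋃ j, matchingEvent p q j := by
  rw [mem_iUnion]
  simp only [mem_matchingEvent_iff hp hq (hs _)]
  constructor
  · rintro rfl
    exact ⟨y, hy, hx⟩
  · rintro ⟨j, hqj, hpj⟩
    exact (hy.unique hqj).trans (hpj.unique hx)

end MatchingEvent

lemma pi_expMeasure_matchingEvent {r : ℝ} (hr : 0 < r) {N : ℕ} {p q : Fin N → ℝ}
    (hp : ∀ i, 0 < p i) (hq : ∀ i, 0 < q i) (j : Fin N) :
    Measure.pi (fun _ => expMeasure r) (matchingEvent p q j)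
      = ENNReal.ofReal (1 / ∑ i, max (q i / q j) (p i / p j)) :=
  pi_expMeasure_forall_mul_lt hr j (fun i => le_max_of_le_left (div_pos (hq i) (hq j)).le)
    (by simp [div_self (hq j).ne', div_self (hp j).ne'])

theorem gls_single_proposal_exact_matching_general
    {Ω : Type*} [MeasurableSpace Ω] (μ : Measure Ω) [IsProbabilityMeasure μ]
    (N : ℕ)
    (p q : Fin N → ℝ) (hp : ∀ i, 0 < p i) (hq : ∀ i, 0 < q i)
    (S : Fin N → Ω → ℝ) (hSmeas : ∀ i, Measurable (S i))
    (hSindep : iIndepFun S μ)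
    (hSexp : ∀ i, μ.map (S i) = expMeasure 1)
    (Y X : Ω → Fin N)
    -- `Y` is a.s. the unique argmin of `i ↦ S i / q i`
    (hY : ∀ᵐ ω ∂μ, ∀ i : Fin N, i ≠ Y ω → S (Y ω) ω / q (Y ω) < S i ω / q i)
    -- `X` is a.s. the unique argmin of `i ↦ S i / p i`
    (hX : ∀ᵐ ω ∂μ, ∀ i : Fin N, i ≠ X ω → S (X ω) ω / p (X ω) < S i ω / p i) :
    μ {ω | Y ω = X ω}
      = ENNReal.ofReal (∑ j : Fin N, 1 / ∑ i : Fin N, max (q i / q j) (p i / p j)) := by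
  set F : Ω → Fin N → ℝ := fun ω i => S i ω
  have hF : Measurable F := measurable_pi_lambda _ hSmeas
  have hlaw : μ.map F = Measure.pi fun _ => expMeasure 1 := by
    rw [hSindep.map_fun_eq_pi_map fun i => (hSmeas i).aemeasurable, funext hSexp]
  have hpos : ∀ᵐ ω ∂μ, ∀ i, 0 < S i ω := ae_all_iff.2 fun i =>
    ae_of_ae_map (hSmeas i).aemeasurable (hSexp i ▸ ae_pos_expMeasure one_pos)
  have hmatch : {ω | Y ω = X ω} =ᵐ[μ] F ⁻¹' ⋃ j, matchingEvent p q j := by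
    filter_upwards [hY, hX, hpos] with ω hYω hXω hSω
    exact propext (eq_iff_mem_iUnion_matchingEvent hp hq hSω hYω hXω)
  have hmeas : ∀ j, MeasurableSet (matchingEvent p q j) := measurableSet_matchingEvent p q
  rw [measure_congr hmatch, ← Measure.map_apply hF (.iUnion hmeas), hlaw,
    measure_iUnion (pairwise_disjoint_matchingEvent hp hq) hmeas, tsum_fintype,
    ENNReal.ofReal_sum_of_nonneg fun j _ => one_div_nonneg.2 <|
      Finset.sum_nonneg fun i _ => le_max_of_le_left (div_pos (hq i) (hq j)).le]
  exact Finset.sum_congr rfl fun j _ => pi_expMeasure_matchingEvent one_pos hp hq j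

/-- **Exact matching probability for a single proposal (K = 1).**
With `Y = argmin_i S i / q i` and `X = argmin_i S i / p i` computed from the same
i.i.d. `Exp(1)` random variables `S i`, the matching probability is exactly
`Pr[Y = X] = ∑ j, 1 / ∑ i, max (q i / q j) (p i / p j)`; in particular the list
matching lemma's lower bound is tight when `K = 1`. -/
theorem gls_single_proposal_exact_matching
    {Ω : Type*} [MeasurableSpace Ω] (μ : Measure Ω) [IsProbabilityMeasure μ]
    (N : ℕ) (hN : 0 < N)
    (p q : Fin N → ℝ) (hp : ∀ i, 0 < p i) (hq : ∀ i, 0 < q i)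
    (hpsum : ∑ i, p i = 1) (hqsum : ∑ i, q i = 1)
    (S : Fin N → Ω → ℝ) (hSmeas : ∀ i, Measurable (S i))
    (hSindep : iIndepFun S μ)
    (hSexp : ∀ i, μ.map (S i) = expMeasure 1)
    (Y X : Ω → Fin N) (hYmeas : Measurable Y) (hXmeas : Measurable X)
    -- `Y` is a.s. the unique argmin of `i ↦ S i / q i`
    (hY : ∀ᵐ ω ∂μ, ∀ i : Fin N, i ≠ Y ω → S (Y ω) ω / q (Y ω) < S i ω / q i)
    -- `X` is a.s. the unique argmin of `i ↦ S i / p i`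
    (hX : ∀ᵐ ω ∂μ, ∀ i : Fin N, i ≠ X ω → S (X ω) ω / p (X ω) < S i ω / p i) :
    μ {ω | Y ω = X ω}
      = ENNReal.ofReal (∑ j : Fin N, 1 / ∑ i : Fin N, max (q i / q j) (p i / p j)) :=
  gls_single_proposal_exact_matching_general μ N p q hp hq S hSmeas hSindep hSexp Y X hY hX
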